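/- Let R be a φ-simple φ-ring, let k be a field, and suppose R is a k-algebra such that φ(algebraMap k R c) = algebraMap k R c for all c ∈ k and the range of algebraMap k R is exactly the subring R^φ of φ-constants. Let D be a field extension of k. Then R ⊗_k D, equipped with the ring endomorphism Φ := φ ⊗ id, is Φ-simple: its only Φ-stable ideals are the zero ideal and the whole ring. -/

import Mathlib

open scoped TensorProduct

/-!
Over a `k`-basis `(b i)` of `D`, `R ⊗[k] D` is free over `R` and `Φ` acts on coordinates by `φ`.
Take `x ≠ 0` in a nonzero `Φ`-ideal `a` with fewest nonzero coordinates and `i` in its support.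
The `i`-th coordinates of elements of `a` supported in the support of `x` form a nonzero
`φ`-ideal of `R`, hence contain `1`; if `y ∈ a` realises it, then `Φ y - y ∈ a` has smaller
support, so `Φ y = y`. The coordinates of `y` are then `φ`-constants, i.e. lie in `k`, so
`y = 1 ⊗ d` with `d ≠ 0`, a unit.
-/

/-- A `φ`-ring `R` is `φ`-simple if the zero ideal and the whole ring are its only
`φ`-ideals (ideals `I` with `φ(I) ⊆ I`). -/
def DiffSimple {R : Type*} [CommRing R] (φ : R →+* R) : Prop :=
  (⊥ : Ideal R) ≠ ⊤ ∧ ∀ I : Ideal R, (∀ x ∈ I, φ x ∈ I) → I = ⊥ ∨ I = ⊤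

namespace Algebra.TensorProduct

variable {k R M ι : Type*} [CommSemiring k] [Semiring R] [Algebra k R] [AddCommMonoid M]
  [Module k M] (b : Module.Basis ι k M)

theorem basis_repr_map_of_map_tmul {φ : R →+* R}
    (hφ : ∀ c : k, φ (algebraMap k R c) = algebraMap k R c)
    (Φ : R ⊗[k] M →+ R ⊗[k] M) (hΦ : ∀ (r : R) (m : M), Φ (r ⊗ₜ m) = φ r ⊗ₜ m)
    (x : R ⊗[k] M) :
    (basis R b).repr (Φ x) = ((basis R b).repr x).mapRange φ φ.map_zero := by
  induction x using _root_.TensorProduct.induction_on with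
  | zero => simp
  | tmul r m => ext i; simp [hΦ, hφ]
  | add x y hx hy => rw [map_add, map_add, map_add, hx, hy, Finsupp.mapRange_add (map_add φ)]

theorem exists_eq_one_tmul_of_basis_repr_mem_range (y : R ⊗[k] M)
    (hy : ∀ i, (basis R b).repr y i ∈ Set.range (algebraMap k R)) : ∃ m : M, y = 1 ⊗ₜ m := by
  choose c hc using hy
  refine ⟨∑ i ∈ ((basis R b).repr y).support, c i • b i, ?_⟩
  conv_lhs => rw [← (basis R b).linearCombination_repr y]
  simp [Finsupp.linearCombination_apply, Finsupp.sum, _root_.TensorProduct.tmul_sum, ← hc,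
    _root_.TensorProduct.tmul_smul]

end Algebra.TensorProduct

namespace Module.Basis

variable {R S ι : Type*} [CommRing R] [CommRing S] [Algebra R S] (B : Module.Basis ι R S)

noncomputable def coeffIdeal (a : Ideal S) (s : Finset ι) (i : ι) : Ideal R :=
  (a.restrictScalars R ⊓ (Finsupp.supported R R (s : Set ι)).comap B.repr.toLinearMap).map
    (Finsupp.lapply i ∘ₗ B.repr.toLinearMap)

theorem mem_coeffIdeal {a : Ideal S} {s : Finset ι} {i : ι} {r : R} :
    r ∈ B.coeffIdeal a s i ↔ ∃ y ∈ a, (B.repr y).support ⊆ s ∧ B.repr y i = r := by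
  simp [coeffIdeal, Finsupp.mem_supported, and_assoc]

theorem mapRange_mem_coeffIdeal {φ : R →+* R} {Φ : S → S}
    (hΦ : ∀ x, B.repr (Φ x) = (B.repr x).mapRange φ φ.map_zero)
    {a : Ideal S} (ha : ∀ x ∈ a, Φ x ∈ a) {s : Finset ι} {i : ι} {r : R}
    (hr : r ∈ B.coeffIdeal a s i) : φ r ∈ B.coeffIdeal a s i := by
  obtain ⟨y, hya, hys, rfl⟩ := B.mem_coeffIdeal.mp hr
  refine B.mem_coeffIdeal.mpr ⟨Φ y, ha y hya, ?_, by simp [hΦ]⟩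
  rw [hΦ]
  exact Finsupp.support_mapRange.trans hys

end Module.Basis

namespace DiffSimple

variable {R : Type*} [CommRing R] {φ : R →+* R}

theorem nontrivial (h : DiffSimple φ) : Nontrivial R :=
  (Submodule.nontrivial_iff R).mp (nontrivial_of_ne _ _ h.1)

theorem exists_mem_ne_zero_fixed (hsimple : DiffSimple φ) {S ι : Type*} [CommRing S] [Algebra R S]
    (B : Module.Basis ι R S) {Φ : S → S}
    (hΦ : ∀ x, B.repr (Φ x) = (B.repr x).mapRange φ φ.map_zero)
    {a : Ideal S} (ha : ∀ x ∈ a, Φ x ∈ a) (ha0 : a ≠ ⊥) : ∃ y ∈ a, y ≠ 0 ∧ Φ y = y := by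
  classical
  have := hsimple.nontrivial
  obtain ⟨x, ⟨hxa, hx0⟩, hmin⟩ := (measure fun y => (B.repr y).support.card).wf.has_min
    {y | y ∈ a ∧ y ≠ 0} (Submodule.exists_mem_ne_zero_of_ne_bot ha0)
  obtain ⟨i, hi⟩ : (B.repr x).support.Nonempty := by simpa using hx0
  have hJ : B.coeffIdeal a (B.repr x).support i = ⊤ :=
    (hsimple.2 _ fun r => B.mapRange_mem_coeffIdeal hΦ ha).resolve_left fun h =>
      Finsupp.mem_support_iff.mp hi <| Ideal.mem_bot.mp <|
        h ▸ B.mem_coeffIdeal.mpr ⟨x, hxa, subset_rfl, rfl⟩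
  obtain ⟨y, hya, hys, hyi⟩ := B.mem_coeffIdeal.mp (hJ ▸ Submodule.mem_top : (1 : R) ∈ _)
  refine ⟨y, hya, fun h => by simp [h] at hyi, sub_eq_zero.mp ?_⟩
  -- The `i`-th coordinate of `Φ y - y` is `φ 1 - 1 = 0`, so minimality of `x` kills it.
  by_contra hne
  refine hmin (Φ y - y) ⟨a.sub_mem (ha y hya) hya, hne⟩ ?_
  have : (B.repr (Φ y - y)).support ⊆ (B.repr x).support.erase i := by
    intro j hj
    rw [Finsupp.mem_support_iff, map_sub, Finsupp.sub_apply, hΦ, Finsupp.mapRange_apply] at hj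
    refine Finset.mem_erase.mpr ⟨?_, hys (Finsupp.mem_support_iff.mpr ?_)⟩
    · rintro rfl
      simp [hyi] at hj
    · rintro h
      simp [h] at hj
  exact (Finset.card_le_card this).trans_lt (Finset.card_erase_lt_of_mem hi)

end DiffSimple

theorem diffSimple_tensor_field_extension_general
    {k R D : Type*} [Field k] [CommRing R] [Algebra k R] [Field D] [Algebra k D]
    (φ : R →+* R) (hsimple : DiffSimple φ)
    (hrange : ∀ r : R, φ r = r ↔ ∃ c : k, algebraMap k R c = r)
    (Φ : (R ⊗[k] D) →+* (R ⊗[k] D))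
    (hΦ : ∀ (r : R) (d : D), Φ (r ⊗ₜ[k] d) = φ r ⊗ₜ[k] d) :
    DiffSimple Φ := by
  have := hsimple.nontrivial
  have := Algebra.TensorProduct.nontrivial_of_algebraMap_injective_of_flat_right k R D
    (algebraMap k R).injective
  set b := Module.Basis.ofVectorSpace k D
  set B := Algebra.TensorProduct.basis R b
  have hΦB := Algebra.TensorProduct.basis_repr_map_of_map_tmul b
    (fun c => (hrange _).mpr ⟨c, rfl⟩) Φ.toAddMonoidHom hΦ
  refine ⟨bot_ne_top, fun a ha => or_iff_not_imp_left.mpr fun ha0 => ?_⟩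
  obtain ⟨y, hya, hy0, hyfix⟩ := hsimple.exists_mem_ne_zero_fixed B hΦB ha ha0
  obtain ⟨d, rfl⟩ := Algebra.TensorProduct.exists_eq_one_tmul_of_basis_repr_mem_range b y
    fun i => (hrange _).mp <| by
      have := congr(B.repr $hyfix i)
      rwa [hΦB, Finsupp.mapRange_apply] at this
  have hd : d ≠ 0 := by rintro rfl; simp at hy0
  exact Ideal.eq_top_of_isUnit_mem a hya
    (IsUnit.of_mul_eq_one (1 ⊗ₜ d⁻¹) (by simp [hd, Algebra.TensorProduct.one_def]))

/-- Let `R` be a `φ`-simple `φ`-ring whose `φ`-constants are exactly the image of a field `k`,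
and let `D` be a field extension of `k`.  Then `R ⊗[k] D`, equipped with the endomorphism
`Φ = φ ⊗ id`, is `Φ`-simple. -/
theorem diffSimple_tensor_field_extension
    {k R D : Type*} [Field k] [CommRing R] [Algebra k R] [Field D] [Algebra k D]
    (φ : R →+* R) (hsimple : DiffSimple φ)
    (hfix : ∀ c : k, φ (algebraMap k R c) = algebraMap k R c)
    (hrange : ∀ r : R, φ r = r ↔ ∃ c : k, algebraMap k R c = r)
    (Φ : (R ⊗[k] D) →+* (R ⊗[k] D))
    (hΦ : ∀ (r : R) (d : D), Φ (r ⊗ₜ[k] d) = φ r ⊗ₜ[k] d) :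
    DiffSimple Φ :=
  diffSimple_tensor_field_extension_general φ hsimple hrange Φ hΦ
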